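/- (Hyperbolic half-planes: disc case) For every λ_c ∈ ℝ and R ≥ 0, the set D = {z ∈ ℂ : Im z > 0 and |z − λ_c| ≤ R} is h-convex: for all z₁, z₂ ∈ D, the arc ARC(z₁, z₂) is contained in D. -/

import Mathlib

/-- The open upper half-plane ℂ₊ = {z ∈ ℂ : Im z > 0}. -/
def Cplus : Set ℂ := {z : ℂ | 0 < z.im}

open Classical in
/-- The hyperbolic geodesic arc between z₁ and z₂: if Re z₁ = Re z₂ it is the vertical
segment between them; otherwise it is the arc of the circle centered at
c = (|z₂|² − |z₁|²)/(2·(Re z₂ − Re z₁)) on the real axis through z₁ and z₂. -/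
noncomputable def ARC (z₁ z₂ : ℂ) : Set ℂ :=
  if z₁.re = z₂.re then
    {w | ∃ t : ℝ, min z₁.im z₂.im ≤ t ∧ t ≤ max z₁.im z₂.im ∧
      w = (z₁.re : ℂ) + (t : ℂ) * Complex.I}
  else
    let c : ℝ := (‖z₂‖ ^ 2 - ‖z₁‖ ^ 2) / (2 * (z₂.re - z₁.re))
    let ρ : ℝ := ‖z₁ - (c : ℂ)‖
    let φ₁ : ℝ := Complex.arg (z₁ - (c : ℂ))
    let φ₂ : ℝ := Complex.arg (z₂ - (c : ℂ))
    {w | ∃ φ : ℝ, min φ₁ φ₂ ≤ φ ∧ φ ≤ max φ₁ φ₂ ∧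
      w = (c : ℂ) + (ρ : ℂ) * Complex.exp (Complex.I * (φ : ℂ))}

/-- A set C ⊆ ℂ₊ is h-convex if for all z₁, z₂ ∈ C, ARC(z₁, z₂) ⊆ C. -/
def HConvex (C : Set ℂ) : Prop :=
  ∀ z₁ ∈ C, ∀ z₂ ∈ C, ARC z₁ z₂ ⊆ C

/-- The h-convex hull of C ⊆ ℂ₊: the intersection of all h-convex sets D with
C ⊆ D ⊆ ℂ₊. -/
def hhull (C : Set ℂ) : Set ℂ :=
  ⋂₀ {D : Set ℂ | HConvex D ∧ C ⊆ D ∧ D ⊆ Cplus}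

lemma lin_bound (A k u u₁ u₂ B : ℝ) (h1 : A + k * u₁ ≤ B) (h2 : A + k * u₂ ≤ B)
    (hl : min u₁ u₂ ≤ u) (hr : u ≤ max u₁ u₂) : A + k * u ≤ B := by
  rcases le_total 0 k with hk | hk
  · rcases max_cases u₁ u₂ with ⟨he, _⟩ | ⟨he, _⟩ <;> nlinarith
  · rcases min_cases u₁ u₂ with ⟨he, _⟩ | ⟨he, _⟩ <;> nlinarith

lemma im_aux (c ρ φ : ℝ) :
    ((c : ℂ) + (ρ : ℂ) * Complex.exp (Complex.I * φ)).im = ρ * Real.sin φ := by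
  rw [mul_comm Complex.I, Complex.exp_mul_I]
  simp [Complex.add_im, Complex.mul_im, Complex.cos_ofReal_re, Complex.sin_ofReal_re,
    Complex.cos_ofReal_im, Complex.sin_ofReal_im]

lemma sq_abs_aux (lc c ρ φ : ℝ) :
    (‖(c : ℂ) + (ρ : ℂ) * Complex.exp (Complex.I * φ) - lc‖) ^ 2 =
      (c - lc) ^ 2 + ρ ^ 2 + 2 * ρ * (c - lc) * Real.cos φ := by
  rw [Complex.sq_norm, Complex.normSq_apply, mul_comm Complex.I, Complex.exp_mul_I]
  simp [Complex.cos_ofReal_re, Complex.sin_ofReal_re, Complex.cos_ofReal_im,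
    Complex.sin_ofReal_im]
  nlinarith [Real.sin_sq_add_cos_sq φ]

lemma arg_mem (z : ℂ) (hz : 0 < z.im) : 0 < z.arg ∧ z.arg < Real.pi := by
  have h0 : 0 ≤ z.arg := Complex.arg_nonneg_iff.2 hz.le
  have hne : z.arg ≠ 0 := by
    intro h; exact absurd (Complex.arg_eq_zero_iff.1 h).2 hz.ne'
  have hpi : z.arg ≠ Real.pi := by
    intro h; exact absurd (Complex.arg_eq_pi_iff.1 h).2 hz.ne'
  exact ⟨lt_of_le_of_ne h0 (Ne.symm hne), (Complex.arg_le_pi z).lt_of_ne hpi⟩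

/-- Hyperbolic half-planes: disc case: for every λ_c ∈ ℝ and R ≥ 0,
the set D = {z ∈ ℂ : Im z > 0 ∧ |z − λ_c| ≤ R} is h-convex. -/
theorem stmt_14 (lc R : ℝ) (hR : 0 ≤ R) :
    HConvex {z : ℂ | 0 < z.im ∧ ‖z - (lc : ℂ)‖ ≤ R} := by
  intro z₁ hz₁ z₂ hz₂ w hw
  obtain ⟨hy₁, hd₁⟩ := hz₁
  obtain ⟨hy₂, hd₂⟩ := hz₂
  have hsq₁ : (‖z₁ - (lc : ℂ)‖) ^ 2 ≤ R ^ 2 :=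
    pow_le_pow_left₀ (norm_nonneg _) hd₁ 2
  have hsq₂ : (‖z₂ - (lc : ℂ)‖) ^ 2 ≤ R ^ 2 :=
    pow_le_pow_left₀ (norm_nonneg _) hd₂ 2
  unfold ARC at hw
  split_ifs at hw with hre
  · obtain ⟨t, ht1, ht2, rfl⟩ := hw
    have himw : ((z₁.re : ℂ) + (t : ℂ) * Complex.I).im = t := by simp
    have ht0 : 0 < t := lt_of_lt_of_le (lt_min hy₁ hy₂) ht1
    refine ⟨by simpa [himw], ?_⟩
    have key : (‖(z₁.re : ℂ) + (t : ℂ) * Complex.I - lc‖) ^ 2 ≤ R ^ 2 := by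
      have e1 : (‖z₁ - (lc : ℂ)‖) ^ 2 = (z₁.re - lc) ^ 2 + z₁.im ^ 2 := by
        rw [Complex.sq_norm, Complex.normSq_apply]; simp; ring
      have e2 : (‖z₂ - (lc : ℂ)‖) ^ 2 = (z₁.re - lc) ^ 2 + z₂.im ^ 2 := by
        rw [Complex.sq_norm, Complex.normSq_apply]; simp [← hre]; ring
      have e3 : (‖(z₁.re : ℂ) + (t : ℂ) * Complex.I - lc‖) ^ 2 =
          (z₁.re - lc) ^ 2 + t ^ 2 := by
        rw [Complex.sq_norm, Complex.normSq_apply]; simp; ring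
      rw [e3]
      rcases le_total z₁.im z₂.im with h | h
      · rw [min_eq_left h] at ht1; rw [max_eq_right h] at ht2; nlinarith
      · rw [min_eq_right h] at ht1; rw [max_eq_left h] at ht2; nlinarith
    exact (pow_le_pow_iff_left₀ (norm_nonneg _) hR (by norm_num)).1 key
  · obtain ⟨φ, hφ1, hφ2, rfl⟩ := hw
    set c : ℝ := (‖z₂‖ ^ 2 - ‖z₁‖ ^ 2) / (2 * (z₂.re - z₁.re)) with hc
    set ρ : ℝ := ‖z₁ - (c : ℂ)‖ with hρ
    set φ₁ : ℝ := Complex.arg (z₁ - (c : ℂ)) with hφ₁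
    set φ₂ : ℝ := Complex.arg (z₂ - (c : ℂ)) with hφ₂
    have him₁ : (z₁ - (c : ℂ)).im = z₁.im := by simp
    have him₂ : (z₂ - (c : ℂ)).im = z₂.im := by simp
    -- same radius
    have hrad : ρ = ‖z₂ - (c : ℂ)‖ := by
      have hne : z₂.re - z₁.re ≠ 0 := sub_ne_zero.2 (Ne.symm hre)
      have e1 : ρ ^ 2 = (z₁.re - c) ^ 2 + z₁.im ^ 2 := by
        rw [hρ, Complex.sq_norm, Complex.normSq_apply]; simp; ring
      have e2 : (‖z₂ - (c : ℂ)‖) ^ 2 = (z₂.re - c) ^ 2 + z₂.im ^ 2 := by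
        rw [Complex.sq_norm, Complex.normSq_apply]; simp; ring
      have a1 : ‖z₁‖ ^ 2 = z₁.re ^ 2 + z₁.im ^ 2 := by
        rw [Complex.sq_norm, Complex.normSq_apply]; ring
      have a2 : ‖z₂‖ ^ 2 = z₂.re ^ 2 + z₂.im ^ 2 := by
        rw [Complex.sq_norm, Complex.normSq_apply]; ring
      have hceq : 2 * c * (z₂.re - z₁.re) = ‖z₂‖ ^ 2 - ‖z₁‖ ^ 2 := by
        rw [hc]; field_simp
      have hsq : ρ ^ 2 = (‖z₂ - (c : ℂ)‖) ^ 2 := by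
        rw [e1, e2]; nlinarith [hceq, a1, a2]
      have h1 : ρ = Real.sqrt (ρ ^ 2) := (Real.sqrt_sq (norm_nonneg _)).symm
      rw [h1, hsq, Real.sqrt_sq (norm_nonneg _)]
    have hρpos : 0 < ρ := by
      rw [hρ]
      refine norm_pos_iff.mpr ?_
      intro h
      rw [Complex.ext_iff] at h
      simp at h
      exact hy₁.ne' h.2
    -- z₁ and z₂ as points on the circle
    have hz₁eq : z₁ = (c : ℂ) + (ρ : ℂ) * Complex.exp (Complex.I * φ₁) := by
      have := Complex.norm_mul_exp_arg_mul_I (z₁ - (c : ℂ))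
      rw [← hρ, ← hφ₁, mul_comm (Complex.I)] at *
      linear_combination -this
    have hz₂eq : z₂ = (c : ℂ) + (ρ : ℂ) * Complex.exp (Complex.I * φ₂) := by
      have := Complex.norm_mul_exp_arg_mul_I (z₂ - (c : ℂ))
      rw [← hφ₂, ← hrad, mul_comm (Complex.I)] at *
      linear_combination -this
    have harg₁ := arg_mem (z₁ - (c : ℂ)) (by rw [him₁]; exact hy₁)
    have harg₂ := arg_mem (z₂ - (c : ℂ)) (by rw [him₂]; exact hy₂)
    rw [← hφ₁] at harg₁; rw [← hφ₂] at harg₂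
    have hφ0 : 0 < φ := lt_of_lt_of_le (lt_min harg₁.1 harg₂.1) hφ1
    have hφpi : φ < Real.pi := lt_of_le_of_lt hφ2 (max_lt harg₁.2 harg₂.2)
    constructor
    · show 0 < ((c : ℂ) + (ρ : ℂ) * Complex.exp (Complex.I * φ)).im
      rw [im_aux]
      exact mul_pos hρpos (Real.sin_pos_of_pos_of_lt_pi hφ0 hφpi)
    · have key : (‖(c : ℂ) + (ρ : ℂ) * Complex.exp (Complex.I * φ) - lc‖) ^ 2
          ≤ R ^ 2 := by
        rw [sq_abs_aux]
        have b1 : (c - lc) ^ 2 + ρ ^ 2 + 2 * ρ * (c - lc) * Real.cos φ₁ ≤ R ^ 2 := by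
          rw [← sq_abs_aux lc c ρ φ₁, ← hz₁eq]; exact hsq₁
        have b2 : (c - lc) ^ 2 + ρ ^ 2 + 2 * ρ * (c - lc) * Real.cos φ₂ ≤ R ^ 2 := by
          rw [← sq_abs_aux lc c ρ φ₂, ← hz₂eq]; exact hsq₂
        have hmono : ∀ a b : ℝ, 0 < a → a ≤ b → b < Real.pi → Real.cos b ≤ Real.cos a := by
          intro a b ha hab hb
          exact Real.cos_le_cos_of_nonneg_of_le_pi ha.le hb.le hab
        have hcl : min (Real.cos φ₁) (Real.cos φ₂) ≤ Real.cos φ := by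
          rcases le_total φ₁ φ₂ with h | h
          · rw [min_eq_left h] at hφ1
            exact le_trans (min_le_right _ _) (hmono φ φ₂ hφ0
              (le_trans hφ2 (by rw [max_eq_right h])) harg₂.2)
          · rw [min_eq_right h] at hφ1
            exact le_trans (min_le_left _ _) (hmono φ φ₁ hφ0
              (le_trans hφ2 (by rw [max_eq_left h])) harg₁.2)
        have hcr : Real.cos φ ≤ max (Real.cos φ₁) (Real.cos φ₂) := by
          rcases le_total φ₁ φ₂ with h | h
          · exact le_trans (hmono φ₁ φ harg₁.1 (le_trans (by rw [min_eq_left h]) hφ1) hφpi)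
              (le_max_left _ _)
          · exact le_trans (hmono φ₂ φ harg₂.1 (le_trans (by rw [min_eq_right h]) hφ1) hφpi)
              (le_max_right _ _)
        have := lin_bound ((c - lc) ^ 2 + ρ ^ 2) (2 * ρ * (c - lc)) (Real.cos φ)
          (Real.cos φ₁) (Real.cos φ₂) (R ^ 2) (by linarith [b1]) (by linarith [b2]) hcl hcr
        linarith
      exact (pow_le_pow_iff_left₀ (norm_nonneg _) hR (by norm_num)).1 key
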